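/- For all natural numbers k ≥ 1 and n with k ≤ n, the elementary symmetric polynomial e_k(x_1,...,x_n) equals ∑_{i=1}^{k} (-1)^{i+1} · h_i(x_1,...,x_{n-i+1}) · e_{k-i}(x_1,...,x_{n-i}). -/

import Mathlib

open MvPolynomial Finset

/-- Elementary symmetric polynomial of degree `k` in the first `m` variables `x_1,…,x_m`
(0-indexed: the variables `X i` with `(i : ℕ) < m`), viewed in the polynomial ring in
`n` variables. It is `1` for `k = 0` and `0` for `k > m`. -/
noncomputable def esymb (R : Type) [CommRing R] (n m k : ℕ) : MvPolynomial (Fin n) R :=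
  ∑ S ∈ (Finset.univ.filter (fun i : Fin n => (i : ℕ) < m)).powersetCard k, ∏ i ∈ S, X i

/-- Complete homogeneous symmetric polynomial of degree `k` in the first `m` variables
`x_1,…,x_m` (0-indexed: the variables `X i` with `(i : ℕ) < m`), viewed in the polynomial
ring in `n` variables. It is `1` for `k = 0` and, for `k > 0`, it is `0` when `m = 0`. -/
noncomputable def hsymb (R : Type) [CommRing R] (n m k : ℕ) : MvPolynomial (Fin n) R :=
  ∑ μ ∈ (Finset.univ.filter (fun i : Fin n => (i : ℕ) < m)).sym k,
    ((μ : Multiset (Fin n)).map X).prod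

/-!
Let `G(M) = ∑_{i=0}^{k} (-1)^i h_i(x_1,…,x_{M+1-i}) e_{k-i}(x_1,…,x_{M-i})`; its `i = 0` term is
`e_k(x_1,…,x_M)` and the other terms are minus the summands of the identity, so the identity says
`G(n) = 0` for `k ≥ 1`. Expanding `h_{i+1}` and `e_{j+1}` in `x_1,…,x_{m+1}` along the last variable
gives `h_{i+1}(m+1) e_j(m) + h_i(m+1) e_{j+1}(m) = h_{i+1}(m) e_j(m) + h_i(m+1) e_{j+1}(m+1)`, which
makes `G(M+1) - G(M)` telescope to zero. Hence `G(M)` does not depend on `M ≥ k - 1`, and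
`G(M) = 0` for `M < k`: then each `e_{k-i}` has fewer variables than its degree, and the last term
contains `h_k` in no variables.
-/

theorem Multiset.esymm_cons {R : Type*} [CommSemiring R] (a : R) (s : Multiset R) (k : ℕ) :
    (a ::ₘ s).esymm (k + 1) = s.esymm (k + 1) + a * s.esymm k := by
  simp only [Multiset.esymm, Multiset.powersetCard_cons, Multiset.map_add, Multiset.sum_add,
    Multiset.map_map, Function.comp_def, Multiset.prod_cons, Multiset.sum_map_mul_left]

theorem Finset.sym_succ_insert {α : Type*} [DecidableEq α] (a : α) (s : Finset α) (k : ℕ) :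
    (insert a s).sym (k + 1) = s.sym (k + 1) ∪ ((insert a s).sym k).image (Sym.cons a) := by
  ext μ
  simp only [mem_union, mem_sym_iff, mem_image, mem_insert]
  constructor
  · intro h
    by_cases ha : a ∈ μ
    · refine Or.inr ⟨μ.erase a ha, fun b hb =>
        h b (Multiset.mem_of_mem_erase (Sym.coe_erase ha ▸ Sym.mem_coe.2 hb)), Sym.cons_erase ha⟩
    · exact Or.inl fun b hb => (h b hb).resolve_left fun hab => ha (hab ▸ hb)
  · rintro (h | ⟨ν, hν, rfl⟩) b hb
    · exact Or.inr (h b hb)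
    · rcases Sym.mem_cons.1 hb with rfl | hb
      · exact Or.inl rfl
      · exact hν b hb

theorem Finset.sum_sym_succ_insert {α M : Type*} [DecidableEq α] [AddCommMonoid M] {a : α}
    {s : Finset α} (ha : a ∉ s) (k : ℕ) (g : Sym α (k + 1) → M) :
    ∑ μ ∈ (insert a s).sym (k + 1), g μ =
      ∑ μ ∈ s.sym (k + 1), g μ + ∑ ν ∈ (insert a s).sym k, g (Sym.cons a ν) := by
  rw [sym_succ_insert, sum_union, sum_image fun _ _ _ _ h => (Sym.cons_inj_right _ _ _).1 h]
  refine disjoint_left.2 fun μ hμ hμ' => ?_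
  obtain ⟨ν, -, rfl⟩ := mem_image.1 hμ'
  exact ha (mem_sym_iff.1 hμ a (Sym.mem_cons_self a ν))

theorem Fin.filter_val_lt_succ {n m : ℕ} (hm : m < n) :
    univ.filter (fun i : Fin n => (i : ℕ) < m + 1) =
      insert ⟨m, hm⟩ (univ.filter fun i : Fin n => (i : ℕ) < m) := by
  ext i
  simp only [mem_filter, mem_univ, true_and, mem_insert, Fin.ext_iff]
  omega

theorem Fin.mk_notMem_filter_val_lt {n m : ℕ} (hm : m < n) :
    (⟨m, hm⟩ : Fin n) ∉ univ.filter fun i : Fin n => (i : ℕ) < m := by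
  simp

section Symb

variable (R : Type) [CommRing R] {n : ℕ}

theorem esymb_zero (m : ℕ) : esymb R n m 0 = 1 := by
  simp [esymb]

theorem hsymb_zero (m : ℕ) : hsymb R n m 0 = 1 := by
  rw [hsymb, sym_zero, sum_singleton]
  rfl

theorem esymb_eq_zero_of_lt {m k : ℕ} (h : m < k) : esymb R n m k = 0 := by
  rw [esymb, powersetCard_eq_empty.2, sum_empty]
  rw [Fin.card_filter_val_lt]
  omega

theorem hsymb_zero_succ (k : ℕ) : hsymb R n 0 (k + 1) = 0 := by
  simp [hsymb]

theorem esymb_succ_succ {m : ℕ} (hm : m < n) (k : ℕ) :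
    esymb R n (m + 1) (k + 1) = esymb R n m (k + 1) + X ⟨m, hm⟩ * esymb R n m k := by
  simp only [esymb, ← esymm_map_val, Fin.filter_val_lt_succ hm,
    insert_val_of_notMem (Fin.mk_notMem_filter_val_lt hm), Multiset.map_cons,
    Multiset.esymm_cons]

theorem hsymb_succ_succ {m : ℕ} (hm : m < n) (k : ℕ) :
    hsymb R n (m + 1) (k + 1) = hsymb R n m (k + 1) + X ⟨m, hm⟩ * hsymb R n (m + 1) k := by
  simp only [hsymb, Fin.filter_val_lt_succ hm,
    sum_sym_succ_insert (Fin.mk_notMem_filter_val_lt hm), Sym.coe_cons, Multiset.map_cons,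
    Multiset.prod_cons, mul_sum]

theorem hsymb_mul_esymb_exchange {m : ℕ} (hm : m < n) (i j : ℕ) :
    hsymb R n (m + 1) (i + 1) * esymb R n m j + hsymb R n (m + 1) i * esymb R n m (j + 1) =
      hsymb R n m (i + 1) * esymb R n m j + hsymb R n (m + 1) i * esymb R n (m + 1) (j + 1) := by
  rw [hsymb_succ_succ R hm, esymb_succ_succ R hm]
  ring

end Symb

noncomputable def altSum (R : Type) [CommRing R] (n M k : ℕ) : MvPolynomial (Fin n) R :=
  ∑ i ∈ range (k + 1), (-1) ^ i * hsymb R n (M + 1 - i) i * esymb R n (M - i) (k - i)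

section AltSum

variable (R : Type) [CommRing R] {n : ℕ}

theorem altSum_eq_zero_of_lt {M k : ℕ} (h : M < k) : altSum R n M k = 0 := by
  refine sum_eq_zero fun i hi => ?_
  rcases (Nat.lt_succ_iff.1 (mem_range.1 hi)).lt_or_eq with hik | rfl
  · rw [esymb_eq_zero_of_lt R (by omega), mul_zero]
  · obtain ⟨j, rfl⟩ := Nat.exists_eq_add_one_of_ne_zero (by omega : i ≠ 0)
    rw [show M + 1 - (j + 1) = 0 by omega, hsymb_zero_succ, mul_zero, zero_mul]

theorem altSum_succ {M k : ℕ} (hM : M < n) (hk : k ≤ M + 1) :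
    altSum R n (M + 1) k = altSum R n M k := by
  set u : ℕ → MvPolynomial (Fin n) R :=
    fun i => (-1) ^ i * hsymb R n (M + 1 - i) i * esymb R n (M + 1 - i) (k - i)
  set t : ℕ → MvPolynomial (Fin n) R :=
    fun i => (-1) ^ i * hsymb R n (M + 1 - i) i * esymb R n (M - i) (k - i)
  have hterm : ∀ i ∈ range k, (-1) ^ (i + 1) * hsymb R n (M + 1 + 1 - (i + 1)) (i + 1) *
      esymb R n (M + 1 - (i + 1)) (k - (i + 1)) = (u (i + 1) - u i) + t i := by
    intro i hi
    obtain ⟨m, hm⟩ : ∃ m, M = m + i := ⟨M - i, by have := mem_range.1 hi; omega⟩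
    obtain ⟨j, hj⟩ : ∃ j, k = j + 1 + i := ⟨k - i - 1, by have := mem_range.1 hi; omega⟩
    have hmn : m < n := by omega
    simp only [u, t, hm, hj, show m + i + 1 + 1 - (i + 1) = m + 1 by omega,
      show m + i + 1 - (i + 1) = m by omega, show m + i + 1 - i = m + 1 by omega,
      show m + i - i = m by omega, show j + 1 + i - (i + 1) = j by omega,
      show j + 1 + i - i = j + 1 by omega]
    linear_combination (-1 : MvPolynomial (Fin n) R) ^ (i + 1) *
      hsymb_mul_esymb_exchange R hmn i j
  have hu0 : u 0 = esymb R n (M + 1) k := by simp [u, hsymb_zero]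
  have huk : u k = t k := by simp [u, t, esymb_zero]
  calc altSum R n (M + 1) k
      = ∑ i ∈ range k, ((u (i + 1) - u i) + t i) + esymb R n (M + 1) k := by
        rw [altSum, sum_range_succ', ← sum_congr rfl hterm]
        simp [hsymb_zero]
    _ = ∑ i ∈ range (k + 1), t i := by
        rw [sum_add_distrib, sum_range_sub, sum_range_succ, hu0, huk]
        ring
    _ = altSum R n M k := rfl

theorem altSum_eq_zero {M k : ℕ} (hM : M ≤ n) (hk : 1 ≤ k) : altSum R n M k = 0 := by
  induction M with
  | zero => exact altSum_eq_zero_of_lt R hk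
  | succ M ih =>
    rcases lt_or_ge (M + 1) k with hlt | hle
    · exact altSum_eq_zero_of_lt R hlt
    · rw [altSum_succ R hM hle, ih (by omega)]

end AltSum

theorem stmt2_general (R : Type) [CommRing R] (n k : ℕ) (hk : 1 ≤ k) :
    esymb R n n k =
      ∑ i ∈ Finset.Icc 1 k, (-1 : MvPolynomial (Fin n) R) ^ (i + 1) *
        hsymb R n (n + 1 - i) i * esymb R n (n - i) (k - i) := by
  have h := altSum_eq_zero R le_rfl hk (n := n)
  rw [altSum, range_eq_Ico, sum_eq_sum_Ico_succ_bot (by omega : 0 < k + 1), zero_add,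
    Ico_add_one_right_eq_Icc] at h
  simp only [pow_zero, hsymb_zero, one_mul, Nat.sub_zero] at h
  rw [eq_neg_of_add_eq_zero_left h, ← sum_neg_distrib]
  exact sum_congr rfl fun i _ => by ring

/-- Proposition: e_k(x_1,…,x_n) = ∑_{i=1}^{k} (-1)^{i+1} h_i(x_1,…,x_{n-i+1}) e_{k-i}(x_1,…,x_{n-i}). -/
theorem stmt2 (R : Type) [CommRing R] (n k : ℕ) (hk : 1 ≤ k) (hkn : k ≤ n) :
    esymb R n n k =
      ∑ i ∈ Finset.Icc 1 k, (-1 : MvPolynomial (Fin n) R) ^ (i + 1) *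
        hsymb R n (n + 1 - i) i * esymb R n (n - i) (k - i) :=
  stmt2_general R n k hk
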